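/- Let M be a type II₁ factor with trace τ, let T ∈ M, and suppose that for every operator S in any type II₁ factor containing the relevant data and every ε > 0 there exists a projection Q with τ(Q) = 1/2 and ‖SQ − QSQ‖₂ < ε (half-splitting property). Then for every ε > 0 and every positive integer n there exist projections 0 = P₀ < P₁ < ⋯ < P_{2ⁿ} = I in M with τ(P_j) = j/2ⁿ and ‖TP_j − P_jTP_j‖₂ ≤ ε for all 0 ≤ j ≤ 2ⁿ. -/

import Mathlib

open scoped ComplexOrder

variable {H : Type*} [NormedAddCommGroup H] [InnerProductSpace ℂ H] [CompleteSpace H]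

/-- The orthogonal projection (as an operator on `H`) onto a closed submodule. -/
noncomputable def projOnto (K : Submodule ℂ H) (hK : IsClosed (K : Set H)) : H →L[ℂ] H :=
  haveI : CompleteSpace K := hK.completeSpace_coe
  K.subtypeL ∘L K.orthogonalProjectionOnto

/-- `N(T)`: the projection onto the kernel of `T`. -/
noncomputable def kerProj (T : H →L[ℂ] H) : H →L[ℂ] H :=
  projOnto (LinearMap.ker (T : H →ₗ[ℂ] H)) (ContinuousLinearMap.isClosed_ker T)

/-- `R(T)`: the projection onto the closure of the range of `T`. -/
noncomputable def rangeProj (T : H →L[ℂ] H) : H →L[ℂ] H :=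
  projOnto (LinearMap.range (T : H →ₗ[ℂ] H)).topologicalClosure (Submodule.isClosed_topologicalClosure _)

/-- A (self-adjoint, idempotent) projection operator. -/
def IsProjection (p : H →L[ℂ] H) : Prop := IsSelfAdjoint p ∧ p * p = p

/-- `τ` is a faithful tracial state on the von Neumann algebra `M`. -/
structure IsFiniteTrace (M : VonNeumannAlgebra H) (τ : (H →L[ℂ] H) → ℂ) : Prop where
  map_one : τ 1 = 1
  map_add : ∀ x y, τ (x + y) = τ x + τ y
  map_smul : ∀ (c : ℂ) (x : H →L[ℂ] H), τ (c • x) = c * τ x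
  tracial : ∀ x ∈ M, ∀ y ∈ M, τ (x * y) = τ (y * x)
  nonneg : ∀ x ∈ M, 0 ≤ τ (star x * x)
  faithful : ∀ x ∈ M, τ (star x * x) = 0 → x = 0

/-- The trace 2-norm `‖x‖₂ = τ(x*x)^{1/2}`. -/
noncomputable def norm2 (τ : (H →L[ℂ] H) → ℂ) (x : H →L[ℂ] H) : ℝ :=
  Real.sqrt (τ (star x * x)).re

/-- `M` is a type II₁ factor with faithful normal tracial state `τ`: a factor whose
trace takes a continuum of values on subprojections of any projection. -/
structure IsTypeII1Factor (M : VonNeumannAlgebra H) (τ : (H →L[ℂ] H) → ℂ) : Prop where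
  trace : IsFiniteTrace M τ
  factor : ∀ z ∈ M, (∀ x ∈ M, z * x = x * z) → ∃ c : ℂ, z = c • (1 : H →L[ℂ] H)
  diffuse : ∀ p ∈ M, IsProjection p → ∀ t : ℝ, 0 ≤ t → t ≤ (τ p).re →
    ∃ q ∈ M, IsProjection q ∧ q * p = q ∧ τ q = (t : ℂ)

/-! Refine dyadically. Given a chain `P₀ ≤ ⋯ ≤ P_{2ⁿ}` whose defects `‖TPⱼ − PⱼTPⱼ‖₂` are at most
`δ`, half-split each gap `e = P_{m+1} − P_m` for the compression `eTe` and insert `P_m + Q` between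
`P_m` and `P_{m+1}`. Writing `P' = P_m + Q`, one has the exact decomposition
`TP' − P'TP' = (1 − P')(TP_m − P_mTP_m) + (TP_{m+1} − P_{m+1}TP_{m+1})Q + (e − Q)(eTeQ − QeTeQ)`,
and multiplying by a projection does not increase `‖·‖₂`, so the new defects are at most `3δ`.
Starting from `0 ≤ 1` with tolerance `ε / 3ⁿ` gives the theorem. -/

lemma isProjection_iff_isStarProjection {p : H →L[ℂ] H} :
    IsProjection p ↔ IsStarProjection p := by
  rw [IsProjection, isStarProjection_iff, and_comm, IsIdempotentElem]

namespace IsStarProjection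

variable {R : Type*} [Ring R] [StarRing R] {p q Q : R}

lemma mul_eq_zero_of_mul_sub_eq (hp : IsStarProjection p) (hqp : q * p = p)
    (hQ : Q * (q - p) = Q) : Q * p = 0 := by
  rw [← hQ, mul_assoc, sub_mul, hqp, hp.isIdempotentElem.eq, sub_self, mul_zero]

lemma sub_mul_eq_of_mul_sub_eq (hp : IsStarProjection p) (hq : IsStarProjection q)
    (hQp : IsStarProjection Q) (hQ : Q * (q - p) = Q) : (q - p) * Q = Q := by
  simpa [star_mul, hQp.isSelfAdjoint.star_eq, hp.isSelfAdjoint.star_eq,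
    hq.isSelfAdjoint.star_eq] using congr(star $hQ)

lemma mul_eq_self_of_mul_sub_eq (hp : IsStarProjection p) (hq : IsStarProjection q)
    (hQp : IsStarProjection Q) (hqp : q * p = p) (hQ : Q * (q - p) = Q) : q * Q = Q := by
  rw [← sub_mul_eq_of_mul_sub_eq hp hq hQp hQ, ← mul_assoc, mul_sub, hq.isIdempotentElem.eq, hqp]

lemma add_of_mul_sub_eq (hp : IsStarProjection p) (hQp : IsStarProjection Q) (hqp : q * p = p)
    (hQ : Q * (q - p) = Q) : IsStarProjection (p + Q) :=
  hp.add hQp <| by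
    simpa [star_mul, hQp.isSelfAdjoint.star_eq, hp.isSelfAdjoint.star_eq] using
      congr(star $(mul_eq_zero_of_mul_sub_eq hp hqp hQ))

lemma defect_add_eq (hp : IsStarProjection p) (hq : IsStarProjection q)
    (hQp : IsStarProjection Q) (hqp : q * p = p) (hQ : Q * (q - p) = Q) (T : R) :
    T * (p + Q) - (p + Q) * T * (p + Q) =
      (1 - (p + Q)) * (T * p - p * T * p) + (T * q - q * T * q) * Q +
        (q - p - Q) * ((q - p) * T * (q - p) * Q - Q * ((q - p) * T * (q - p)) * Q) := by
  have hQp0 := mul_eq_zero_of_mul_sub_eq hp hqp hQ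
  have heQ := sub_mul_eq_of_mul_sub_eq hp hq hQp hQ
  have hqQ := mul_eq_self_of_mul_sub_eq hp hq hQp hqp hQ
  have hA : (1 - (p + Q)) * (T * p - p * T * p) = (1 - (p + Q)) * T * p := by
    have : (1 - (p + Q)) * p = 0 := by
      rw [sub_mul, one_mul, add_mul, hp.isIdempotentElem.eq, hQp0, add_zero, sub_self]
    rw [mul_sub, mul_assoc p, ← mul_assoc (1 - (p + Q)) p, this, zero_mul, sub_zero, mul_assoc]
  have hB : (T * q - q * T * q) * Q = T * Q - q * T * Q := by
    rw [sub_mul, mul_assoc T, mul_assoc (q * T), hqQ]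
  have hC : (q - p - Q) * ((q - p) * T * (q - p) * Q - Q * ((q - p) * T * (q - p)) * Q) =
      (q - p - Q) * T * Q := by
    have he : (q - p - Q) * (q - p) = q - p - Q := by
      rw [sub_mul, (hp.sub_of_mul_eq_right hq hqp).isIdempotentElem.eq, hQ]
    have hQQ : (q - p - Q) * Q = 0 := by
      rw [sub_mul, heQ, hQp.isIdempotentElem.eq, sub_self]
    calc _ = (q - p - Q) * (q - p) * T * ((q - p) * Q)
          - (q - p - Q) * Q * ((q - p) * T * (q - p) * Q) := by noncomm_ring
      _ = (q - p - Q) * T * Q := by rw [he, heQ, hQQ, zero_mul, sub_zero]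
  rw [hA, hB, hC]
  noncomm_ring

end IsStarProjection

variable {M : VonNeumannAlgebra H} {τ : (H →L[ℂ] H) → ℂ}

namespace IsFiniteTrace

lemma map_zero (hτ : IsFiniteTrace M τ) : τ 0 = 0 := by
  simpa using hτ.map_smul 0 0

lemma map_sub (hτ : IsFiniteTrace M τ) (x y : H →L[ℂ] H) : τ (x - y) = τ x - τ y := by
  rw [eq_sub_iff_add_eq, ← hτ.map_add, sub_add_cancel]

lemma re_nonneg (hτ : IsFiniteTrace M τ) {x : H →L[ℂ] H} (hx : x ∈ M) :
    0 ≤ (τ (star x * x)).re :=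
  (Complex.nonneg_iff.1 (hτ.nonneg x hx)).1

lemma sq_norm2 (hτ : IsFiniteTrace M τ) {x : H →L[ℂ] H} (hx : x ∈ M) :
    norm2 τ x ^ 2 = (τ (star x * x)).re :=
  Real.sq_sqrt (hτ.re_nonneg hx)

lemma norm2_zero (hτ : IsFiniteTrace M τ) : norm2 τ 0 = 0 := by
  simp [norm2, hτ.map_zero]

lemma norm2_star (hτ : IsFiniteTrace M τ) {x : H →L[ℂ] H} (hx : x ∈ M) :
    norm2 τ (star x) = norm2 τ x := by
  rw [norm2, norm2, star_star, hτ.tracial x hx _ (star_mem hx)]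

/-- Cauchy–Schwarz, from the nonnegativity of `t ↦ Re τ((x + t y)⋆(x + t y))` on `ℝ`. -/
lemma re_map_star_mul_add_le (hτ : IsFiniteTrace M τ) {x y : H →L[ℂ] H} (hx : x ∈ M)
    (hy : y ∈ M) : (τ (star x * y + star y * x)).re ≤ 2 * (norm2 τ x * norm2 τ y) := by
  set s := (τ (star x * y + star y * x)).re
  have hquad : ∀ t : ℝ,
      0 ≤ (τ (star y * y)).re * (t * t) + s * t + (τ (star x * x)).re := by
    intro t
    have hexpand : star (x + (t : ℂ) • y) * (x + (t : ℂ) • y) = star x * x +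
        (t : ℂ) • (star x * y + star y * x) + ((t : ℂ) * t) • (star y * y) := by
      simp only [star_add, star_smul, Complex.star_def, Complex.conj_ofReal, add_mul, mul_add,
        smul_mul_assoc, mul_smul_comm, smul_add, smul_smul]
      abel
    have h := hτ.re_nonneg (add_mem hx (M.toStarSubalgebra.smul_mem hy (t : ℂ)))
    rw [hexpand, hτ.map_add, hτ.map_add, hτ.map_smul, hτ.map_smul] at h
    simp only [Complex.add_re, Complex.re_ofReal_mul, ← Complex.ofReal_mul] at h
    linarith
  have hdisc : s ^ 2 ≤ (2 * (norm2 τ x * norm2 τ y)) ^ 2 := by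
    have := discrim_le_zero hquad
    rw [discrim] at this
    rw [mul_pow, mul_pow, hτ.sq_norm2 hx, hτ.sq_norm2 hy]
    linarith
  exact le_of_sq_le_sq hdisc (by unfold norm2; positivity)

lemma norm2_add_le (hτ : IsFiniteTrace M τ) {x y : H →L[ℂ] H} (hx : x ∈ M) (hy : y ∈ M) :
    norm2 τ (x + y) ≤ norm2 τ x + norm2 τ y := by
  have hexpand : star (x + y) * (x + y) = star x * x + (star x * y + star y * x) + star y * y := by
    rw [star_add]; noncomm_ring
  have hcs := hτ.re_map_star_mul_add_le hx hy
  rw [norm2, Real.sqrt_le_left (by unfold norm2; positivity), hexpand, hτ.map_add, hτ.map_add,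
    Complex.add_re, Complex.add_re, add_sq, ← hτ.sq_norm2 hx, ← hτ.sq_norm2 hy]
  linarith

lemma norm2_mul_le_of_isStarProjection_left (hτ : IsFiniteTrace M τ) {p x : H →L[ℂ] H}
    (hpM : p ∈ M) (hp : IsStarProjection p) (hx : x ∈ M) : norm2 τ (p * x) ≤ norm2 τ x := by
  have hsplit : star (p * x) * (p * x) + star ((1 - p) * x) * ((1 - p) * x) = star x * x := by
    simp only [star_mul, hp.isSelfAdjoint.star_eq, hp.one_sub.isSelfAdjoint.star_eq]
    calc _ = star x * (p * p) * x + star x * ((1 - p) * (1 - p)) * x := by noncomm_ring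
      _ = star x * x := by
        rw [hp.isIdempotentElem.eq, hp.one_sub.isIdempotentElem.eq]; noncomm_ring
  have hrest := hτ.re_nonneg (mul_mem (sub_mem (one_mem M) hpM) hx)
  apply Real.sqrt_le_sqrt
  rw [← hsplit, hτ.map_add, Complex.add_re]
  linarith

lemma norm2_mul_le_of_isStarProjection_right (hτ : IsFiniteTrace M τ) {p x : H →L[ℂ] H}
    (hpM : p ∈ M) (hp : IsStarProjection p) (hx : x ∈ M) : norm2 τ (x * p) ≤ norm2 τ x := by
  rw [← hτ.norm2_star (mul_mem hx hpM), star_mul, hp.isSelfAdjoint.star_eq, ← hτ.norm2_star hx]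
  exact hτ.norm2_mul_le_of_isStarProjection_left hpM hp (star_mem hx)

lemma norm2_defect_add_le (hτ : IsFiniteTrace M τ) {T p q Q : H →L[ℂ] H}
    (hT : T ∈ M) (hpM : p ∈ M) (hqM : q ∈ M) (hQM : Q ∈ M) (hp : IsStarProjection p)
    (hq : IsStarProjection q) (hQp : IsStarProjection Q) (hqp : q * p = p)
    (hQ : Q * (q - p) = Q) :
    norm2 τ (T * (p + Q) - (p + Q) * T * (p + Q)) ≤
      norm2 τ (T * p - p * T * p) + norm2 τ (T * q - q * T * q) +
        norm2 τ ((q - p) * T * (q - p) * Q - Q * ((q - p) * T * (q - p)) * Q) := by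
  have heM : q - p ∈ M := sub_mem hqM hpM
  have hSM : (q - p) * T * (q - p) ∈ M := mul_mem (mul_mem heM hT) heM
  have hApM : T * p - p * T * p ∈ M := sub_mem (mul_mem hT hpM) (mul_mem (mul_mem hpM hT) hpM)
  have hAqM : T * q - q * T * q ∈ M := sub_mem (mul_mem hT hqM) (mul_mem (mul_mem hqM hT) hqM)
  have hCM : (q - p) * T * (q - p) * Q - Q * ((q - p) * T * (q - p)) * Q ∈ M :=
    sub_mem (mul_mem hSM hQM) (mul_mem (mul_mem hQM hSM) hQM)
  have hPM : 1 - (p + Q) ∈ M := sub_mem (one_mem M) (add_mem hpM hQM)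
  have hA := hτ.norm2_mul_le_of_isStarProjection_left hPM
    (hp.add_of_mul_sub_eq hQp hqp hQ).one_sub hApM
  have hB := hτ.norm2_mul_le_of_isStarProjection_right hQM hQp hAqM
  have hC := hτ.norm2_mul_le_of_isStarProjection_left (sub_mem heM hQM)
    (hQp.sub_of_mul_eq_right (hp.sub_of_mul_eq_right hq hqp)
      (hp.sub_mul_eq_of_mul_sub_eq hq hQp hQ)) hCM
  have hAB := hτ.norm2_add_le (mul_mem hPM hApM) (mul_mem hAqM hQM)
  have hABC := hτ.norm2_add_le (add_mem (mul_mem hPM hApM) (mul_mem hAqM hQM))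
    (mul_mem (sub_mem heM hQM) hCM)
  rw [hp.defect_add_eq hq hQp hqp hQ]
  linarith

end IsFiniteTrace

lemma Nat.forall_le_two_mul_of {R : ℕ → Prop} {N : ℕ} (heven : ∀ m ≤ N, R (2 * m))
    (hodd : ∀ m < N, R (2 * m + 1)) : ∀ j ≤ 2 * N, R j := by
  intro j hj
  obtain ⟨m, rfl | rfl⟩ := Nat.even_or_odd' j
  exacts [heven m (by omega), hodd m (by omega)]

lemma Nat.forall_lt_two_mul_of {R : ℕ → Prop} {N : ℕ} (heven : ∀ m < N, R (2 * m))
    (hodd : ∀ m < N, R (2 * m + 1)) : ∀ k < 2 * N, R k := by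
  intro k hk
  obtain ⟨m, rfl | rfl⟩ := Nat.even_or_odd' k
  exacts [heven m (by omega), hodd m (by omega)]

def interleave {α : Type*} [Add α] (P Q : ℕ → α) (j : ℕ) : α :=
  if j % 2 = 0 then P (j / 2) else P (j / 2) + Q (j / 2)

@[simp]
lemma interleave_two_mul {α : Type*} [Add α] (P Q : ℕ → α) (m : ℕ) :
    interleave P Q (2 * m) = P m := by
  simp [interleave]

@[simp]
lemma interleave_two_mul_add_one {α : Type*} [Add α] (P Q : ℕ → α) (m : ℕ) :
    interleave P Q (2 * m + 1) = P m + Q m := by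
  have hm : (2 * m + 1) / 2 = m := by omega
  simp [interleave, hm]

def HasHalfSplitting (M : VonNeumannAlgebra H) (τ : (H →L[ℂ] H) → ℂ) : Prop :=
  ∀ p ∈ M, IsProjection p → p ≠ 0 → ∀ S ∈ M, S = p * S * p → ∀ ε : ℝ, 0 < ε →
    ∃ Q ∈ M, IsProjection Q ∧ Q * p = Q ∧ τ Q = τ p / 2 ∧ norm2 τ (S * Q - Q * S * Q) < ε

structure IsDyadicChain (M : VonNeumannAlgebra H) (τ : (H →L[ℂ] H) → ℂ) (T : H →L[ℂ] H)
    (δ : ℝ) (n : ℕ) (P : ℕ → H →L[ℂ] H) : Prop where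
  map_zero : P 0 = 0
  map_two_pow : P (2 ^ n) = 1
  mem : ∀ j ≤ 2 ^ n, P j ∈ M
  isStarProjection : ∀ j ≤ 2 ^ n, IsStarProjection (P j)
  trace_eq : ∀ j ≤ 2 ^ n, τ (P j) = j / 2 ^ n
  defect_le : ∀ j ≤ 2 ^ n, norm2 τ (T * P j - P j * T * P j) ≤ δ
  mul_succ : ∀ k < 2 ^ n, P (k + 1) * P k = P k

lemma isDyadicChain_zero (hτ : IsFiniteTrace M τ) (T : H →L[ℂ] H) {δ : ℝ} (hδ : 0 ≤ δ) :
    IsDyadicChain M τ T δ 0 (fun j ↦ if j = 0 then 0 else 1) := by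
  refine ⟨by simp, by simp, ?_, ?_, ?_, ?_, ?_⟩ <;>
    simp [Nat.le_one_iff_eq_zero_or_eq_one, zero_mem, one_mem, hτ.map_zero, hτ.map_one,
      hτ.norm2_zero, hδ]

namespace IsDyadicChain

variable {T : H →L[ℂ] H} {δ : ℝ} {n : ℕ} {P : ℕ → H →L[ℂ] H}

lemma mul_of_le (hP : IsDyadicChain M τ T δ n P) {i j : ℕ} (hij : i ≤ j) (hj : j ≤ 2 ^ n) :
    P j * P i = P i := by
  induction j, hij using Nat.le_induction with
  | base => exact (hP.isStarProjection i hj).isIdempotentElem.eq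
  | succ j hij ih => rw [← ih (by omega), ← mul_assoc, hP.mul_succ j (by omega)]

lemma injOn (hP : IsDyadicChain M τ T δ n P) :
    Set.InjOn P (Set.Iic (2 ^ n)) := by
  intro i hi j hj hij
  have h := congrArg τ hij
  rw [hP.trace_eq i hi, hP.trace_eq j hj, div_left_inj' (by positivity)] at h
  exact_mod_cast h

lemma exists_half (hP : IsDyadicChain M τ T δ n P) (hτ : IsFiniteTrace M τ)
    (hsplit : HasHalfSplitting M τ) (hT : T ∈ M) (hδ : 0 < δ) {m : ℕ} (hm : m < 2 ^ n) :
    ∃ Q ∈ M, IsStarProjection Q ∧ Q * (P (m + 1) - P m) = Q ∧ τ Q = 1 / 2 ^ (n + 1) ∧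
      norm2 τ ((P (m + 1) - P m) * T * (P (m + 1) - P m) * Q -
        Q * ((P (m + 1) - P m) * T * (P (m + 1) - P m)) * Q) ≤ δ := by
  set e := P (m + 1) - P m
  have heM : e ∈ M := sub_mem (hP.mem _ hm) (hP.mem _ hm.le)
  have he : IsStarProjection e := (hP.isStarProjection m hm.le).sub_of_mul_eq_right
    (hP.isStarProjection _ hm) (hP.mul_succ m hm)
  have hτe : τ e = 1 / 2 ^ n := by
    rw [hτ.map_sub, hP.trace_eq _ hm, hP.trace_eq _ hm.le]
    push_cast
    ring
  have he0 : e ≠ 0 := fun h ↦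
    one_div_ne_zero (pow_ne_zero n (two_ne_zero' ℂ)) (by rw [← hτe, h, hτ.map_zero])
  have hcorner : e * T * e = e * (e * T * e) * e := by
    calc e * T * e = (e * e) * T * (e * e) := by rw [he.isIdempotentElem.eq]
      _ = e * (e * T * e) * e := by noncomm_ring
  obtain ⟨Q, hQM, hQ, hQe, hτQ, hdefect⟩ :=
    hsplit e heM (isProjection_iff_isStarProjection.2 he) he0 _ (mul_mem (mul_mem heM hT) heM)
      hcorner δ hδ
  refine ⟨Q, hQM, isProjection_iff_isStarProjection.1 hQ, hQe, ?_, hdefect.le⟩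
  rw [hτQ, hτe, pow_succ]
  ring

lemma interleave (hP : IsDyadicChain M τ T δ n P) (hτ : IsFiniteTrace M τ) (hT : T ∈ M)
    (hδ : 0 ≤ δ) {Q : ℕ → H →L[ℂ] H} (hQM : ∀ m < 2 ^ n, Q m ∈ M)
    (hQ : ∀ m < 2 ^ n, IsStarProjection (Q m))
    (hQe : ∀ m < 2 ^ n, Q m * (P (m + 1) - P m) = Q m)
    (hτQ : ∀ m < 2 ^ n, τ (Q m) = 1 / 2 ^ (n + 1))
    (hQdefect : ∀ m < 2 ^ n, norm2 τ ((P (m + 1) - P m) * T * (P (m + 1) - P m) * Q m -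
        Q m * ((P (m + 1) - P m) * T * (P (m + 1) - P m)) * Q m) ≤ δ) :
    IsDyadicChain M τ T (3 * δ) (n + 1) (_root_.interleave P Q) := by
  have hp := hP.isStarProjection
  constructor
  · simpa [_root_.interleave] using hP.map_zero
  all_goals rw [pow_succ']
  · simpa using hP.map_two_pow
  · refine Nat.forall_le_two_mul_of (fun m hm ↦ ?_) (fun m hm ↦ ?_)
    · simpa using hP.mem m hm
    · simpa using add_mem (hP.mem m hm.le) (hQM m hm)
  · refine Nat.forall_le_two_mul_of (fun m hm ↦ ?_) (fun m hm ↦ ?_)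
    · simpa using hp m hm
    · simpa using (hp m hm.le).add_of_mul_sub_eq (hQ m hm) (hP.mul_succ m hm) (hQe m hm)
  · refine Nat.forall_le_two_mul_of (fun m hm ↦ ?_) (fun m hm ↦ ?_)
    · rw [interleave_two_mul, hP.trace_eq m hm]
      push_cast
      ring
    · rw [interleave_two_mul_add_one, hτ.map_add, hP.trace_eq m hm.le, hτQ m hm]
      push_cast
      ring
  · refine Nat.forall_le_two_mul_of (fun m hm ↦ ?_) (fun m hm ↦ ?_)
    · rw [interleave_two_mul]
      linarith [hP.defect_le m hm]
    · have := hτ.norm2_defect_add_le hT (hP.mem m hm.le) (hP.mem _ hm) (hQM m hm) (hp m hm.le)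
        (hp _ hm) (hQ m hm) (hP.mul_succ m hm) (hQe m hm)
      rw [interleave_two_mul_add_one]
      linarith [hP.defect_le m hm.le, hP.defect_le _ hm, hQdefect m hm]
  · refine Nat.forall_lt_two_mul_of (fun m hm ↦ ?_) (fun m hm ↦ ?_)
    · rw [interleave_two_mul_add_one, interleave_two_mul, add_mul,
        (hp m hm.le).isIdempotentElem.eq,
        (hp m hm.le).mul_eq_zero_of_mul_sub_eq (hP.mul_succ m hm) (hQe m hm), add_zero]
    · rw [show 2 * m + 1 + 1 = 2 * (m + 1) by ring, interleave_two_mul,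
        interleave_two_mul_add_one, mul_add, hP.mul_succ m hm,
        (hp m hm.le).mul_eq_self_of_mul_sub_eq (hp _ hm) (hQ m hm) (hP.mul_succ m hm) (hQe m hm)]

lemma exists_refine (hP : IsDyadicChain M τ T δ n P) (hτ : IsFiniteTrace M τ)
    (hsplit : HasHalfSplitting M τ) (hT : T ∈ M) (hδ : 0 < δ) :
    ∃ P', IsDyadicChain M τ T (3 * δ) (n + 1) P' := by
  choose! Q hQM hQ hQe hτQ hQdefect using fun m (hm : m < 2 ^ n) ↦
    hP.exists_half hτ hsplit hT hδ hm
  exact ⟨_, hP.interleave hτ hT hδ.le hQM hQ hQe hτQ hQdefect⟩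

end IsDyadicChain

theorem exists_isDyadicChain (hτ : IsFiniteTrace M τ) (hsplit : HasHalfSplitting M τ)
    {T : H →L[ℂ] H} (hT : T ∈ M) : ∀ (n : ℕ) {δ : ℝ}, 0 < δ → ∃ P, IsDyadicChain M τ T δ n P
  | 0, _, hδ => ⟨_, isDyadicChain_zero hτ T hδ.le⟩
  | n + 1, δ, hδ => by
    obtain ⟨P, hP⟩ := exists_isDyadicChain hτ hsplit hT n (div_pos hδ three_pos)
    rw [← mul_div_cancel₀ δ (three_ne_zero' ℝ)]
    exact hP.exists_refine hτ hsplit hT (div_pos hδ three_pos)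

/-- Lemma 2.5. Assuming the half-splitting property in every corner of `M`
(Lemma 2.6 of the paper), every `T ∈ M` admits, for each `ε > 0` and `n`, an increasing
chain of projections `0 = P₀ < P₁ < ⋯ < P_{2ⁿ} = I` with `τ(P_j) = j/2ⁿ` and
`‖TP_j − P_jTP_j‖₂ ≤ ε`. -/
theorem stmt_4 {H : Type*} [NormedAddCommGroup H] [InnerProductSpace ℂ H] [CompleteSpace H]
    (M : VonNeumannAlgebra H) (τ : (H →L[ℂ] H) → ℂ) (hM : IsTypeII1Factor M τ)
    (halfsplit : ∀ p ∈ M, IsProjection p → p ≠ 0 →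
      ∀ S ∈ M, S = p * S * p → ∀ ε : ℝ, 0 < ε →
        ∃ Q ∈ M, IsProjection Q ∧ Q * p = Q ∧ τ Q = τ p / 2 ∧
          norm2 τ (S * Q - Q * S * Q) < ε)
    (T : H →L[ℂ] H) (hT : T ∈ M) (ε : ℝ) (hε : 0 < ε) (n : ℕ) :
    ∃ P : Fin (2 ^ n + 1) → (H →L[ℂ] H),
      P 0 = 0 ∧ P (Fin.last (2 ^ n)) = 1 ∧
      (∀ j, P j ∈ M ∧ IsProjection (P j) ∧ τ (P j) = ((j : ℕ) : ℂ) / (2 ^ n : ℂ) ∧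
        norm2 τ (T * P j - P j * T * P j) ≤ ε) ∧
      (∀ i j : Fin (2 ^ n + 1), i ≤ j → P j * P i = P i) ∧
      (∀ i j : Fin (2 ^ n + 1), i < j → P i ≠ P j) := by
  obtain ⟨P, hP⟩ := exists_isDyadicChain hM.trace halfsplit hT n hε
  have hle (j : Fin (2 ^ n + 1)) : (j : ℕ) ≤ 2 ^ n := Nat.lt_succ_iff.mp j.isLt
  refine ⟨fun j ↦ P j, hP.map_zero, hP.map_two_pow, fun j ↦ ⟨hP.mem j (hle j),
    isProjection_iff_isStarProjection.2 (hP.isStarProjection j (hle j)), hP.trace_eq j (hle j),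
    hP.defect_le j (hle j)⟩, fun i j hij ↦ hP.mul_of_le hij (hle j),
    fun i j hij heq ↦ hij.ne (Fin.ext (hP.injOn (hle i) (hle j) heq))⟩
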